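/- arXiv:2312.02294 — 2 statements merged into one kernel-verified Lean document; each statement's English description precedes it below -/
import Mathlib

section
/- Let L > 0 and fix α, β with 0 < |α| < 1 and β > 0. Let u : [0,L]² → ℝ be of class C³ and satisfy the boundary conditions u(0,y) = u(L,y) = 0, u_x(L,y) = α u_x(0,y) for all y ∈ [0,L], and u_y(x,L) = β u_x(x,L), u_y(x,0) = 0 for all x ∈ [0,L]. Then ∫_Ω u(x,y) · ( −u_x(x,y) − u_xxx(x,y) − (∂ₓ⁻¹ u_yy)(x,y) ) dx dy = −((1−α²)/2) ∫₀^L u_x(0,y)² dy − β ∫₀^L u(x,L)² dx − ½ ∫₀^L ((∂ₓ⁻¹ u_y)(0,y))² dy; in particular this quantity is ≤ 0. -/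
open MeasureTheory Real

noncomputable section

/-- Partial derivative in `x` of `u(x,y)`. -/
def pdx (u : ℝ → ℝ → ℝ) (x y : ℝ) : ℝ := deriv (fun x' => u x' y) x

/-- Third partial derivative in `x` of `u(x,y)`. -/
def pdx3 (u : ℝ → ℝ → ℝ) (x y : ℝ) : ℝ := iteratedDeriv 3 (fun x' => u x' y) x

/-- Partial derivative in `y` of `u(x,y)`. -/
def pdy (u : ℝ → ℝ → ℝ) (x y : ℝ) : ℝ := deriv (fun y' => u x y') y

/-- Second partial derivative in `y` of `u(x,y)`. -/
def pdy2 (u : ℝ → ℝ → ℝ) (x y : ℝ) : ℝ := iteratedDeriv 2 (fun y' => u x y') y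

/-- The nonlocal operator `(∂ₓ⁻¹ w)(x,y) = -∫ₓ^L w(s,y) ds`. -/
def pxInv (L : ℝ) (w : ℝ → ℝ → ℝ) (x y : ℝ) : ℝ := -(∫ s in x..L, w s y)

/-- The adjoint nonlocal operator `((∂ₓ⁻¹)* w)(x,y) = ∫₀^x w(s,y) ds`. -/
def pxInvStar (w : ℝ → ℝ → ℝ) (x y : ℝ) : ℝ := ∫ s in (0:ℝ)..x, w s y

/-! For each `y`, `u (-u_x - u_xxx)` has the `x`-antiderivative `-u²/2 - u u_xx + u_x²/2`, and the
boundary conditions in `x` leave `(α² - 1)/2 · u_x(0,y)²`. For the nonlocal term put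
`R = ∂ₓ⁻¹ u_y`, so that `∂_y R = ∂ₓ⁻¹ u_yy` and `∂_x R = u_y`. Integrating by parts in `y`
gives the boundary term `-u(x,L) R(x,L) = -β u(x,L)²` (the condition `u_y = β u_x` on `y = L`
integrates to `R(x,L) = β u(x,L)`, and `R(x,0) = 0`) plus `∫ u_y R = ∫ R R_x`, whose
`x`-integral is `-R(0,y)²/2` because `R(L,y) = 0`. -/

open Set Function Filter intervalIntegral

section PartialDerivatives

variable {u : ℝ → ℝ → ℝ}

theorem pdx3_eq (u : ℝ → ℝ → ℝ) : pdx3 u = pdx (pdx (pdx u)) := by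
  funext x y
  simp only [pdx3, iteratedDeriv_eq_iterate]
  rfl

theorem pdy2_eq (u : ℝ → ℝ → ℝ) : pdy2 u = pdy (pdy u) := by
  funext x y
  simp only [pdy2, iteratedDeriv_eq_iterate]
  rfl

theorem hasDerivAt_fderiv_apply_x (hu : Differentiable ℝ (uncurry u)) (x y : ℝ) :
    HasDerivAt (u · y) (fderiv ℝ (uncurry u) (x, y) (1, 0)) x :=
  (hu _).hasFDerivAt.comp_hasDerivAt x ((hasDerivAt_id x).prodMk (hasDerivAt_const x y))

theorem hasDerivAt_fderiv_apply_y (hu : Differentiable ℝ (uncurry u)) (x y : ℝ) :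
    HasDerivAt (u x ·) (fderiv ℝ (uncurry u) (x, y) (0, 1)) y :=
  (hu _).hasFDerivAt.comp_hasDerivAt y ((hasDerivAt_const y x).prodMk (hasDerivAt_id y))

theorem hasDerivAt_pdx (hu : Differentiable ℝ (uncurry u)) (x y : ℝ) :
    HasDerivAt (u · y) (pdx u x y) x :=
  (hasDerivAt_fderiv_apply_x hu x y).differentiableAt.hasDerivAt

theorem hasDerivAt_pdy (hu : Differentiable ℝ (uncurry u)) (x y : ℝ) :
    HasDerivAt (u x ·) (pdy u x y) y :=
  (hasDerivAt_fderiv_apply_y hu x y).differentiableAt.hasDerivAt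

theorem contDiff_uncurry_pdx {m n : WithTop ℕ∞} (hu : ContDiff ℝ n (uncurry u))
    (h : m + 1 ≤ n) : ContDiff ℝ m (uncurry (pdx u)) := by
  have hdiff : Differentiable ℝ (uncurry u) := hu.differentiable (h.trans_lt' (by simp)).ne'
  have : uncurry (pdx u) = fun p => fderiv ℝ (uncurry u) p (1, 0) :=
    funext fun p => (hasDerivAt_fderiv_apply_x hdiff p.1 p.2).deriv
  rw [this]
  exact (hu.fderiv_right h).clm_apply contDiff_const

theorem contDiff_uncurry_pdy {m n : WithTop ℕ∞} (hu : ContDiff ℝ n (uncurry u))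
    (h : m + 1 ≤ n) : ContDiff ℝ m (uncurry (pdy u)) := by
  have hdiff : Differentiable ℝ (uncurry u) := hu.differentiable (h.trans_lt' (by simp)).ne'
  have : uncurry (pdy u) = fun p => fderiv ℝ (uncurry u) p (0, 1) :=
    funext fun p => (hasDerivAt_fderiv_apply_y hdiff p.1 p.2).deriv
  rw [this]
  exact (hu.fderiv_right h).clm_apply contDiff_const

theorem continuous_uncurry_pdx3 (hu : ContDiff ℝ 3 (uncurry u)) :
    Continuous (uncurry (pdx3 u)) := by
  rw [pdx3_eq]
  exact (contDiff_uncurry_pdx (m := 0) (contDiff_uncurry_pdx (m := 1)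
    (contDiff_uncurry_pdx (m := 2) hu (by norm_num)) (by norm_num)) (by norm_num)).continuous

theorem continuous_uncurry_pdy2 (hu : ContDiff ℝ 2 (uncurry u)) :
    Continuous (uncurry (pdy2 u)) := by
  rw [pdy2_eq]
  exact (contDiff_uncurry_pdy (m := 0) (contDiff_uncurry_pdy (m := 1) hu (by norm_num))
    (by norm_num)).continuous

end PartialDerivatives

section ParametricIntegrals

variable {g g' : ℝ → ℝ → ℝ}

theorem intervalIntegral_swap_of_continuous (hg : Continuous (uncurry g)) (a b c d : ℝ) :
    ∫ x in a..b, ∫ y in c..d, g x y = ∫ y in c..d, ∫ x in a..b, g x y :=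
  intervalIntegral_intervalIntegral_swap <|
    (hg.continuousOn.integrableOn_compact (isCompact_uIcc.prod isCompact_uIcc)).mono_set
      (prod_mono uIoc_subset_uIcc uIoc_subset_uIcc)

theorem intervalIntegral_add_of_continuous {g₁ g₂ : ℝ → ℝ → ℝ}
    (hg₁ : Continuous (uncurry g₁)) (hg₂ : Continuous (uncurry g₂)) (a b c d : ℝ) :
    ∫ x in a..b, ∫ y in c..d, (g₁ x y + g₂ x y) =
      (∫ x in a..b, ∫ y in c..d, g₁ x y) + ∫ x in a..b, ∫ y in c..d, g₂ x y := by
  rw [← integral_add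
    ((continuous_parametric_intervalIntegral_of_continuous' hg₁ c d).intervalIntegrable a b)
    ((continuous_parametric_intervalIntegral_of_continuous' hg₂ c d).intervalIntegrable a b)]
  exact integral_congr fun x _ => integral_add ((hg₁.uncurry_left x).intervalIntegrable c d)
    ((hg₂.uncurry_left x).intervalIntegrable c d)

/-- Differentiation under the integral sign: write `g s y = g s y₀ + ∫_{y₀}^y g' s t dt` and
exchange the order of integration. -/
theorem hasDerivAt_intervalIntegral_param (hg : Continuous (uncurry g))
    (hg' : Continuous (uncurry g')) (hd : ∀ s y, HasDerivAt (g s) (g' s y) y) (a b y₀ : ℝ) :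
    HasDerivAt (fun y => ∫ s in a..b, g s y) (∫ s in a..b, g' s y₀) y₀ := by
  have hg'swap : Continuous (uncurry fun t s => g' s t) := hg'.comp continuous_swap
  have key : ∀ y, ∫ s in a..b, g s y =
      (∫ s in a..b, g s y₀) + ∫ t in y₀..y, ∫ s in a..b, g' s t := by
    intro y
    rw [← intervalIntegral_swap_of_continuous hg', ← integral_add
      ((hg.uncurry_right y₀).intervalIntegrable a b)
      ((continuous_parametric_intervalIntegral_of_continuous' hg' y₀ y).intervalIntegrable a b)]
    refine integral_congr fun s _ => ?_
    rw [integral_eq_sub_of_hasDerivAt (fun t _ => hd s t)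
      ((hg'.uncurry_left s).intervalIntegrable _ _)]
    ring
  have hprim := (continuous_parametric_intervalIntegral_of_continuous' (μ := volume) hg'swap a b
    |>.integral_hasStrictDerivAt y₀ y₀).hasDerivAt
  exact (hprim.const_add _).congr_of_eventuallyEq (Eventually.of_forall key)

end ParametricIntegrals

section NonlocalOperator

variable {g g' : ℝ → ℝ → ℝ} {L : ℝ}

theorem pxInv_eq_integral (L : ℝ) (g : ℝ → ℝ → ℝ) (x y : ℝ) :
    pxInv L g x y = ∫ s in L..x, g s y :=
  (integral_symm x L).symm

@[simp]
theorem pxInv_self (g : ℝ → ℝ → ℝ) (L y : ℝ) : pxInv L g L y = 0 := by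
  simp [pxInv]

theorem continuous_uncurry_pxInv (hg : Continuous (uncurry g)) :
    Continuous (uncurry (pxInv L g)) := by
  have : uncurry (pxInv L g) = fun p : ℝ × ℝ => ∫ s in L..p.1, g s p.2 :=
    funext fun p => pxInv_eq_integral L g p.1 p.2
  rw [this]
  exact continuous_parametric_intervalIntegral_of_continuous
    (f := fun (p : ℝ × ℝ) s => g s p.2) (hg.comp (continuous_snd.prodMk continuous_fst.snd))
    continuous_fst

theorem hasDerivAt_pxInv_x (hg : Continuous (uncurry g)) (x y : ℝ) :
    HasDerivAt (pxInv L g · y) (g x y) x := by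
  simp only [pxInv_eq_integral]
  exact ((hg.uncurry_right y).integral_hasStrictDerivAt L x).hasDerivAt

theorem hasDerivAt_pxInv_y (hg : Continuous (uncurry g)) (hg' : Continuous (uncurry g'))
    (hd : ∀ s y, HasDerivAt (g s) (g' s y) y) (x y : ℝ) :
    HasDerivAt (pxInv L g x ·) (pxInv L g' x y) y :=
  (hasDerivAt_intervalIntegral_param hg hg' hd x L y).neg

end NonlocalOperator

section OneDimensional

variable {f f₁ f₂ f₃ : ℝ → ℝ} {a b : ℝ}

theorem integral_deriv_mul_self (hf : ∀ x ∈ uIcc a b, HasDerivAt f (f₁ x) x)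
    (hint : IntervalIntegrable f₁ volume a b) :
    ∫ x in a..b, f₁ x * f x = (f b ^ 2 - f a ^ 2) / 2 := by
  have hcont : ContinuousOn f (uIcc a b) := fun x hx => (hf x hx).continuousAt.continuousWithinAt
  refine (integral_eq_sub_of_hasDerivAt (f := fun x => f x ^ 2 / 2) (fun x hx => ?_)
    (hint.mul_continuousOn hcont)).trans (sub_div _ _ _).symm
  exact (((hf x hx).pow 2).div_const 2).congr_deriv (by ring)

theorem integral_mul_neg_deriv_sub_deriv3 (h₀ : ∀ x, HasDerivAt f (f₁ x) x)
    (h₁ : ∀ x, HasDerivAt f₁ (f₂ x) x) (h₂ : ∀ x, HasDerivAt f₂ (f₃ x) x)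
    (h₃ : Continuous f₃) (ha : f a = 0) (hb : f b = 0) :
    ∫ x in a..b, f x * (-f₁ x - f₃ x) = (f₁ b ^ 2 - f₁ a ^ 2) / 2 := by
  have hf : Continuous f := continuous_iff_continuousAt.2 fun x => (h₀ x).continuousAt
  have hf₁ : Continuous f₁ := continuous_iff_continuousAt.2 fun x => (h₁ x).continuousAt
  rw [integral_eq_sub_of_hasDerivAt (f := fun x => -(f x ^ 2) / 2 - f x * f₂ x + f₁ x ^ 2 / 2)
    (fun x _ => ?_) ((by fun_prop : Continuous fun x => f x * (-f₁ x - f₃ x)).intervalIntegrable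
      a b)]
  · simp only [ha, hb]
    ring
  · exact ((((h₀ x).pow 2).neg.div_const 2).sub ((h₀ x).mul (h₂ x))).add
      (((h₁ x).pow 2).div_const 2) |>.congr_deriv (by ring)

end OneDimensional

section Dissipation

variable {u : ℝ → ℝ → ℝ} {L : ℝ}

theorem integral_integral_mul_neg_pdx_sub_pdx3 {α : ℝ} (hL : 0 ≤ L)
    (hu : ContDiff ℝ 3 (uncurry u)) (h₀ : ∀ y ∈ Icc 0 L, u 0 y = 0)
    (h₁ : ∀ y ∈ Icc 0 L, u L y = 0) (hα : ∀ y ∈ Icc 0 L, pdx u L y = α * pdx u 0 y) :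
    ∫ x in (0:ℝ)..L, ∫ y in (0:ℝ)..L, u x y * (-pdx u x y - pdx3 u x y) =
      -((1 - α ^ 2) / 2) * ∫ y in (0:ℝ)..L, pdx u 0 y ^ 2 := by
  have hux : ContDiff ℝ 2 (uncurry (pdx u)) := contDiff_uncurry_pdx hu (by norm_num)
  have huxx : ContDiff ℝ 1 (uncurry (pdx (pdx u))) := contDiff_uncurry_pdx hux (by norm_num)
  have huxxx := continuous_uncurry_pdx3 hu
  rw [intervalIntegral_swap_of_continuous (g := fun x y => u x y * (-pdx u x y - pdx3 u x y))
    (hu.continuous.mul (hux.continuous.neg.sub huxxx)), ← intervalIntegral.integral_const_mul]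
  refine integral_congr fun y hy => ?_
  rw [uIcc_of_le hL] at hy
  rw [pdx3_eq, integral_mul_neg_deriv_sub_deriv3
    (hasDerivAt_pdx (hu.differentiable (by norm_num)) · y)
    (hasDerivAt_pdx (hux.differentiable (by norm_num)) · y)
    (hasDerivAt_pdx (huxx.differentiable one_ne_zero) · y) (pdx3_eq u ▸ huxxx.uncurry_right y)
    (h₀ y hy) (h₁ y hy), hα y hy]
  ring

theorem pxInv_pdy_eq_of_pdy_eq {β x : ℝ} (hu : ContDiff ℝ 1 (uncurry u)) (hLL : u L L = 0)
    (htop : ∀ x ∈ Icc 0 L, pdy u x L = β * pdx u x L) (hx : x ∈ Icc 0 L) :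
    pxInv L (pdy u) x L = β * u x L := by
  have hsub : uIcc x L ⊆ Icc 0 L := by
    rw [uIcc_of_le hx.2]
    exact Icc_subset_Icc_left hx.1
  rw [pxInv, integral_congr fun s hs => htop s (hsub hs), intervalIntegral.integral_const_mul,
    integral_eq_sub_of_hasDerivAt (fun s _ => hasDerivAt_pdx (hu.differentiable one_ne_zero) s L)
      ((contDiff_uncurry_pdx (m := 0) hu (by norm_num)).continuous.uncurry_right L
        |>.intervalIntegrable _ _), hLL]
  ring

theorem integral_integral_mul_neg_pxInv_pdy2 {β : ℝ} (hL : 0 ≤ L)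
    (hu : ContDiff ℝ 2 (uncurry u)) (hLL : u L L = 0)
    (htop : ∀ x ∈ Icc 0 L, pdy u x L = β * pdx u x L)
    (hbot : ∀ x ∈ Icc 0 L, pdy u x 0 = 0) :
    ∫ x in (0:ℝ)..L, ∫ y in (0:ℝ)..L, u x y * -pxInv L (pdy2 u) x y =
      -β * (∫ x in (0:ℝ)..L, u x L ^ 2) -
        1 / 2 * ∫ y in (0:ℝ)..L, pxInv L (pdy u) 0 y ^ 2 := by
  have hd : Differentiable ℝ (uncurry u) := hu.differentiable (by norm_num)
  have huy : ContDiff ℝ 1 (uncurry (pdy u)) := contDiff_uncurry_pdy hu (by norm_num)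
  have huyy := continuous_uncurry_pdy2 hu
  set R := pxInv L (pdy u)
  have hR : Continuous (uncurry R) := continuous_uncurry_pxInv huy.continuous
  have hRy : ∀ x y, HasDerivAt (R x ·) (pxInv L (pdy2 u) x y) y := by
    rw [pdy2_eq] at huyy ⊢
    exact hasDerivAt_pxInv_y huy.continuous huyy (hasDerivAt_pdy (huy.differentiable one_ne_zero))
  have hR_top : ∀ x ∈ Icc 0 L, R x L = β * u x L := fun x hx =>
    pxInv_pdy_eq_of_pdy_eq (hu.of_le (by norm_num)) hLL htop hx
  have hR_bot : ∀ x ∈ Icc 0 L, R x 0 = 0 := fun x hx => by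
    have hsub : uIcc x L ⊆ Icc 0 L := by
      rw [uIcc_of_le hx.2]
      exact Icc_subset_Icc_left hx.1
    simp only [R, pxInv]
    rw [integral_congr fun s hs => hbot s (hsub hs)]
    simp
  have hslice : ∀ x ∈ uIcc 0 L, ∫ y in (0:ℝ)..L, u x y * -pxInv L (pdy2 u) x y =
      -β * u x L ^ 2 + ∫ y in (0:ℝ)..L, pdy u x y * R x y := fun x hx => by
    rw [uIcc_of_le hL] at hx
    simp only [mul_neg]
    rw [intervalIntegral.integral_neg, integral_mul_deriv_eq_deriv_mul
      (fun y _ => hasDerivAt_pdy hd x y) (fun y _ => hRy x y)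
      ((huy.continuous.uncurry_left x).intervalIntegrable _ _)
      (((continuous_uncurry_pxInv huyy).uncurry_left x).intervalIntegrable _ _),
      hR_top x hx, hR_bot x hx]
    ring
  have hRR : ∀ y, ∫ x in (0:ℝ)..L, pdy u x y * R x y = -(1 / 2) * R 0 y ^ 2 := fun y => by
    rw [integral_deriv_mul_self (fun x _ => hasDerivAt_pxInv_x huy.continuous x y)
      ((huy.continuous.uncurry_right y).intervalIntegrable _ _), pxInv_self]
    ring
  have hcont : Continuous (uncurry fun x y => pdy u x y * R x y) := huy.continuous.mul hR
  have huL : Continuous (u · L) := hu.continuous.uncurry_right L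
  rw [integral_congr hslice, intervalIntegral.integral_add
    ((by fun_prop : Continuous fun x => -β * u x L ^ 2).intervalIntegrable _ _)
    ((continuous_parametric_intervalIntegral_of_continuous' hcont _ _).intervalIntegrable _ _),
    intervalIntegral.integral_const_mul, intervalIntegral_swap_of_continuous hcont,
    integral_congr fun y _ => hRR y, intervalIntegral.integral_const_mul]
  ring

theorem integral_integral_mul_kp_operator {α β : ℝ} (hL : 0 ≤ L)
    (hu : ContDiff ℝ 3 (uncurry u)) (h₀ : ∀ y ∈ Icc 0 L, u 0 y = 0)
    (h₁ : ∀ y ∈ Icc 0 L, u L y = 0) (hα : ∀ y ∈ Icc 0 L, pdx u L y = α * pdx u 0 y)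
    (htop : ∀ x ∈ Icc 0 L, pdy u x L = β * pdx u x L)
    (hbot : ∀ x ∈ Icc 0 L, pdy u x 0 = 0) :
    ∫ x in (0:ℝ)..L, ∫ y in (0:ℝ)..L, u x y * (-pdx u x y - pdx3 u x y - pxInv L (pdy2 u) x y) =
      -((1 - α ^ 2) / 2) * (∫ y in (0:ℝ)..L, pdx u 0 y ^ 2) - β * (∫ x in (0:ℝ)..L, u x L ^ 2) -
        1 / 2 * ∫ y in (0:ℝ)..L, pxInv L (pdy u) 0 y ^ 2 := by
  have hsplit : ∀ x y, u x y * (-pdx u x y - pdx3 u x y - pxInv L (pdy2 u) x y) =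
      u x y * (-pdx u x y - pdx3 u x y) + u x y * -pxInv L (pdy2 u) x y := fun _ _ => by ring
  simp only [hsplit]
  rw [intervalIntegral_add_of_continuous ?_ ?_,
    integral_integral_mul_neg_pdx_sub_pdx3 hL hu h₀ h₁ hα,
    integral_integral_mul_neg_pxInv_pdy2 hL (hu.of_le (by norm_num)) (h₁ L ⟨hL, le_rfl⟩) htop hbot]
  · ring
  · exact hu.continuous.mul ((contDiff_uncurry_pdx (m := 0) hu (by norm_num)).continuous.neg.sub
      (continuous_uncurry_pdx3 hu))
  · exact hu.continuous.mul
      (continuous_uncurry_pxInv (continuous_uncurry_pdy2 (hu.of_le (by norm_num)))).neg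

end Dissipation

theorem kp_operator_dissipative_general (L α β : ℝ) (hL : 0 < L)
    (hα1 : |α| < 1) (hβ : 0 < β)
    (u : ℝ → ℝ → ℝ) (hu : ContDiff ℝ 3 (fun p : ℝ × ℝ => u p.1 p.2))
    (hbx : ∀ y ∈ Set.Icc (0:ℝ) L, u 0 y = 0 ∧ u L y = 0 ∧ pdx u L y = α * pdx u 0 y)
    (hby : ∀ x ∈ Set.Icc (0:ℝ) L, pdy u x L = β * pdx u x L ∧ pdy u x 0 = 0) :
    (∫ x in (0:ℝ)..L, ∫ y in (0:ℝ)..L,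
        u x y * (-(pdx u x y) - pdx3 u x y - pxInv L (pdy2 u) x y))
      = -((1 - α^2)/2) * (∫ y in (0:ℝ)..L, (pdx u 0 y)^2)
        - β * (∫ x in (0:ℝ)..L, (u x L)^2)
        - (1/2) * (∫ y in (0:ℝ)..L, (pxInv L (pdy u) 0 y)^2) ∧
    (∫ x in (0:ℝ)..L, ∫ y in (0:ℝ)..L,
        u x y * (-(pdx u x y) - pdx3 u x y - pxInv L (pdy2 u) x y)) ≤ 0 := by
  have hid := integral_integral_mul_kp_operator hL.le hu (fun y hy => (hbx y hy).1)
    (fun y hy => (hbx y hy).2.1) (fun y hy => (hbx y hy).2.2) (fun x hx => (hby x hx).1)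
    (fun x hx => (hby x hx).2)
  refine ⟨hid, hid ▸ ?_⟩
  have hα2 : 0 ≤ (1 - α ^ 2) / 2 := by nlinarith [sq_abs α, abs_nonneg α]
  have h₁ : 0 ≤ ∫ y in (0:ℝ)..L, pdx u 0 y ^ 2 :=
    integral_nonneg hL.le fun _ _ => sq_nonneg _
  have h₂ : 0 ≤ ∫ x in (0:ℝ)..L, u x L ^ 2 := integral_nonneg hL.le fun _ _ => sq_nonneg _
  have h₃ : 0 ≤ ∫ y in (0:ℝ)..L, pxInv L (pdy u) 0 y ^ 2 :=
    integral_nonneg hL.le fun _ _ => sq_nonneg _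
  nlinarith [mul_nonneg hα2 h₁, mul_nonneg hβ.le h₂, mul_nonneg one_half_pos.le h₃]

/-- Dissipativity of the linearized KP-II operator `A u = -u_x - u_xxx - ∂ₓ⁻¹ u_yy`
under the closed-loop boundary conditions:
`∫_Ω u · Au = -((1-α²)/2) ∫₀^L u_x(0,y)² dy - β ∫₀^L u(x,L)² dx
  - ½ ∫₀^L ((∂ₓ⁻¹ u_y)(0,y))² dy ≤ 0`. -/
theorem kp_operator_dissipative (L α β : ℝ) (hL : 0 < L)
    (hα0 : 0 < |α|) (hα1 : |α| < 1) (hβ : 0 < β)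
    (u : ℝ → ℝ → ℝ) (hu : ContDiff ℝ 3 (fun p : ℝ × ℝ => u p.1 p.2))
    (hbx : ∀ y ∈ Set.Icc (0:ℝ) L, u 0 y = 0 ∧ u L y = 0 ∧ pdx u L y = α * pdx u 0 y)
    (hby : ∀ x ∈ Set.Icc (0:ℝ) L, pdy u x L = β * pdx u x L ∧ pdy u x 0 = 0) :
    (∫ x in (0:ℝ)..L, ∫ y in (0:ℝ)..L,
        u x y * (-(pdx u x y) - pdx3 u x y - pxInv L (pdy2 u) x y))
      = -((1 - α^2)/2) * (∫ y in (0:ℝ)..L, (pdx u 0 y)^2)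
        - β * (∫ x in (0:ℝ)..L, (u x L)^2)
        - (1/2) * (∫ y in (0:ℝ)..L, (pxInv L (pdy u) 0 y)^2) ∧
    (∫ x in (0:ℝ)..L, ∫ y in (0:ℝ)..L,
        u x y * (-(pdx u x y) - pdx3 u x y - pxInv L (pdy2 u) x y)) ≤ 0 :=
  kp_operator_dissipative_general L α β hL hα1 hβ u hu hbx hby

end
end

section
/- Let L > 0 and let λ ∈ ℝ with λ ≠ 0. Suppose u : [0,L]² → ℝ is of class C³ and satisfies λ u(x,y) + u_xxx(x,y) − ∫ₓ^L u_yy(s,y) ds = 0 for all (x,y) ∈ Ω, together with the boundary conditions u(0,y) = u(L,y) = 0 and u_x(0,y) = u_x(L,y) = 0 for all y ∈ [0,L], u(x,L) = 0, u_y(x,L) = 0 and u_y(x,0) = 0 for all x ∈ [0,L], and ∫₀^L u_y(s,y) ds = 0 for all y ∈ [0,L]. Then u is identically zero on [0,L]². -/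
/-! Test the equation against `u` in `x`. The term `∫ u u_xxx` vanishes by the boundary conditions
at `x = 0, L`, and moving the tail integral `∫ₓᴸ` onto `u` turns the nonlocal term into `∫ U u_yy`
with `U = ∫₀ˣ u`, so `λ ∫ u² dx = ∫ U u_yy dx` for each `y`. Integrating over `y` and by parts
(`u_y = 0` at `y = 0, L`) gives `-∬ V u_y` with `V = ∂_y U = ∫₀ˣ u_y`; as `u_y = ∂_x V`, its
`x`-integral is `V(L, y)² / 2`, which vanishes by the flux condition. Hence `λ ∬ u² = 0`. -/

open MeasureTheory Real

noncomputable section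

def partialX (F : ℝ × ℝ → ℝ) (p : ℝ × ℝ) : ℝ := fderiv ℝ F p (1, 0)

def partialY (F : ℝ × ℝ → ℝ) (p : ℝ × ℝ) : ℝ := fderiv ℝ F p (0, 1)

section PartialDerivatives

variable {F : ℝ × ℝ → ℝ}

theorem ContDiff.partialX {n m : WithTop ℕ∞} (hF : ContDiff ℝ n F) (hmn : m + 1 ≤ n) :
    ContDiff ℝ m (partialX F) :=
  (ContinuousLinearMap.apply ℝ ℝ ((1 : ℝ), (0 : ℝ))).contDiff.comp (hF.fderiv_right hmn)

theorem ContDiff.partialY {n m : WithTop ℕ∞} (hF : ContDiff ℝ n F) (hmn : m + 1 ≤ n) :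
    ContDiff ℝ m (partialY F) :=
  (ContinuousLinearMap.apply ℝ ℝ ((0 : ℝ), (1 : ℝ))).contDiff.comp (hF.fderiv_right hmn)

theorem hasDerivAt_partialX (hF : Differentiable ℝ F) (x y : ℝ) :
    HasDerivAt (fun x' => F (x', y)) (partialX F (x, y)) x :=
  (hF (x, y)).hasFDerivAt.comp_hasDerivAt x ((hasDerivAt_id x).prodMk (hasDerivAt_const x y))

theorem hasDerivAt_partialY (hF : Differentiable ℝ F) (x y : ℝ) :
    HasDerivAt (fun y' => F (x, y')) (partialY F (x, y)) y :=
  (hF (x, y)).hasFDerivAt.comp_hasDerivAt y ((hasDerivAt_const y x).prodMk (hasDerivAt_id y))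

theorem continuous_partialX_partialX_partialX (hF : ContDiff ℝ 3 F) :
    Continuous (partialX (partialX (partialX F))) :=
  (((hF.partialX (m := 2) (by norm_num)).partialX (m := 1) (by norm_num)).partialX (m := 0)
    (by norm_num)).continuous

theorem continuous_partialY_partialY (hF : ContDiff ℝ 2 F) :
    Continuous (partialY (partialY F)) :=
  ((hF.partialY (m := 1) (by norm_num)).partialY (m := 0) (by norm_num)).continuous

end PartialDerivatives

section Curried

variable {u : ℝ → ℝ → ℝ}

theorem pdx_eq (hu : Differentiable ℝ (Function.uncurry u)) (x y : ℝ) :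
    pdx u x y = partialX (Function.uncurry u) (x, y) :=
  (hasDerivAt_partialX hu x y).deriv

theorem pdy_eq (hu : Differentiable ℝ (Function.uncurry u)) (x y : ℝ) :
    pdy u x y = partialY (Function.uncurry u) (x, y) :=
  (hasDerivAt_partialY hu x y).deriv

theorem pdx3_eq_s16 (hu : ContDiff ℝ 3 (Function.uncurry u)) (x y : ℝ) :
    pdx3 u x y = partialX (partialX (partialX (Function.uncurry u))) (x, y) := by
  have hX := hu.partialX (m := 2) (by norm_num)
  have hXX := hX.partialX (m := 1) (by norm_num)
  have h1 : deriv (fun x' => u x' y) = fun x' => partialX (Function.uncurry u) (x', y) :=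
    funext fun x' => (hasDerivAt_partialX (hu.differentiable (by norm_num)) x' y).deriv
  have h2 : deriv (fun x' => partialX (Function.uncurry u) (x', y))
      = fun x' => partialX (partialX (Function.uncurry u)) (x', y) :=
    funext fun x' => (hasDerivAt_partialX (hX.differentiable (by norm_num)) x' y).deriv
  rw [pdx3, iteratedDeriv_succ, iteratedDeriv_succ, iteratedDeriv_one, h1, h2]
  exact (hasDerivAt_partialX (hXX.differentiable one_ne_zero) x y).deriv

theorem pdy2_eq_s16 (hu : ContDiff ℝ 2 (Function.uncurry u)) (x y : ℝ) :
    pdy2 u x y = partialY (partialY (Function.uncurry u)) (x, y) := by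
  have hY := hu.partialY (m := 1) (by norm_num)
  have h1 : deriv (fun y' => u x y') = fun y' => partialY (Function.uncurry u) (x, y') :=
    funext fun y' => (hasDerivAt_partialY (hu.differentiable (by norm_num)) x y').deriv
  rw [pdy2, iteratedDeriv_succ, iteratedDeriv_one, h1]
  exact (hasDerivAt_partialY (hY.differentiable one_ne_zero) x y).deriv

end Curried

section OneVariable

open intervalIntegral Set

variable {a b : ℝ}

theorem integral_mul_deriv_self {f f' : ℝ → ℝ} (hf : ∀ x ∈ uIcc a b, HasDerivAt f (f' x) x)
    (hf' : IntervalIntegrable f' volume a b) :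
    ∫ x in a..b, f x * f' x = (f b ^ 2 - f a ^ 2) / 2 := by
  have hderiv : ∀ x ∈ uIcc a b, HasDerivAt (fun x => f x ^ 2 / 2) (f x * f' x) x := fun x hx =>
    (((hf x hx).fun_pow 2).div_const 2).congr_deriv (by simp; ring)
  have hcont : ContinuousOn f (uIcc a b) := fun x hx => (hf x hx).continuousAt.continuousWithinAt
  rw [integral_eq_sub_of_hasDerivAt hderiv (hf'.continuousOn_mul hcont)]
  ring

theorem integral_mul_third_deriv {f f' f'' f''' : ℝ → ℝ}
    (hf : ∀ x ∈ uIcc a b, HasDerivAt f (f' x) x) (hf' : ∀ x ∈ uIcc a b, HasDerivAt f' (f'' x) x)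
    (hf'' : ∀ x ∈ uIcc a b, HasDerivAt f'' (f''' x) x)
    (hf''' : IntervalIntegrable f''' volume a b) :
    ∫ x in a..b, f x * f''' x
      = f b * f'' b - f a * f'' a - (f' b ^ 2 - f' a ^ 2) / 2 := by
  have hf''_int : IntervalIntegrable f'' volume a b :=
    ContinuousOn.intervalIntegrable fun x hx => (hf'' x hx).continuousAt.continuousWithinAt
  have hf'_int : IntervalIntegrable f' volume a b :=
    ContinuousOn.intervalIntegrable fun x hx => (hf' x hx).continuousAt.continuousWithinAt
  rw [integral_mul_deriv_eq_deriv_mul hf hf'' hf'_int hf''', ← integral_mul_deriv_self hf' hf''_int]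

theorem integral_primitive_mul_self {g : ℝ → ℝ} (hg : Continuous g) :
    ∫ x in a..b, (∫ s in a..x, g s) * g x = (∫ s in a..b, g s) ^ 2 / 2 := by
  rw [integral_mul_deriv_self (fun x _ => hg.integral_hasStrictDerivAt a x |>.hasDerivAt)
    (hg.intervalIntegrable a b)]
  simp

theorem hasDerivAt_integral_tail {g : ℝ → ℝ} (hg : Continuous g) (x : ℝ) :
    HasDerivAt (fun x => ∫ s in x..b, g s) (-g x) x :=
  integral_hasDerivAt_left (hg.intervalIntegrable x b)
    hg.stronglyMeasurable.stronglyMeasurableAtFilter hg.continuousAt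

theorem integral_mul_integral_tail {f g : ℝ → ℝ} (hf : Continuous f) (hg : Continuous g) :
    ∫ x in a..b, f x * ∫ s in x..b, g s = ∫ x in a..b, (∫ s in a..x, f s) * g x := by
  have hibp := integral_mul_deriv_eq_deriv_mul (fun x _ => hasDerivAt_integral_tail (b := b) hg x)
    (fun x _ => (hf.integral_hasStrictDerivAt a x).hasDerivAt)
    (hg.neg.intervalIntegrable a b) (hf.intervalIntegrable a b)
  simp only [integral_same, zero_mul, mul_zero, sub_zero, zero_sub, neg_mul,
    intervalIntegral.integral_neg, neg_neg] at hibp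
  simpa only [mul_comm] using hibp

theorem integral_sq_eq_of_third_order_eq {f f' f'' f''' g : ℝ → ℝ} {lam : ℝ}
    (hf : ∀ x, HasDerivAt f (f' x) x) (hf' : ∀ x, HasDerivAt f' (f'' x) x)
    (hf'' : ∀ x, HasDerivAt f'' (f''' x) x) (hf''' : Continuous f''') (hg : Continuous g)
    (heq : ∀ x ∈ uIcc a b, lam * f x + f''' x - ∫ s in x..b, g s = 0)
    (ha : f a = 0) (hb : f b = 0) (ha' : f' a = 0) (hb' : f' b = 0) :
    lam * ∫ x in a..b, f x ^ 2 = ∫ x in a..b, (∫ s in a..x, f s) * g x := by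
  have hfc : Continuous f := continuous_iff_continuousAt.2 fun x => (hf x).continuousAt
  have htail : Continuous fun x => ∫ s in x..b, g s :=
    continuous_iff_continuousAt.2 fun x => (hasDerivAt_integral_tail hg x).continuousAt
  have hthird : ∫ x in a..b, f x * f''' x = 0 := by
    rw [integral_mul_third_deriv (fun x _ => hf x) (fun x _ => hf' x) (fun x _ => hf'' x)
      (hf'''.intervalIntegrable a b), ha, hb, ha', hb']
    ring
  calc lam * ∫ x in a..b, f x ^ 2
      = ∫ x in a..b, (f x * ∫ s in x..b, g s) - f x * f''' x := by
        rw [← intervalIntegral.integral_const_mul]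
        exact integral_congr fun x hx => by linear_combination f x * heq x hx
    _ = ∫ x in a..b, (∫ s in a..x, f s) * g x := by
        have hint₁ : IntervalIntegrable (fun x => f x * ∫ s in x..b, g s) volume a b :=
          (hfc.mul htail).intervalIntegrable a b
        have hint₂ : IntervalIntegrable (fun x => f x * f''' x) volume a b :=
          (hfc.mul hf''').intervalIntegrable a b
        rw [intervalIntegral.integral_sub hint₁ hint₂, hthird, sub_zero,
          integral_mul_integral_tail hfc hg]

theorem eqOn_zero_of_integral_eq_zero {f : ℝ → ℝ} (hab : a < b) (hf : ContinuousOn f (Icc a b))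
    (hnonneg : ∀ x ∈ Icc a b, 0 ≤ f x) (hint : ∫ x in a..b, f x = 0) : EqOn f 0 (Icc a b) := by
  have hae : f =ᵐ[volume.restrict (Ioc a b)] 0 :=
    (integral_eq_zero_iff_of_le_of_nonneg_ae hab.le
      (ae_restrict_of_forall_mem measurableSet_Ioc fun x hx => hnonneg x (Ioc_subset_Icc_self hx))
      (hf.intervalIntegrable_of_Icc hab.le)).1 hint
  rw [Measure.restrict_congr_set Ioc_ae_eq_Icc] at hae
  exact Measure.eqOn_Icc_of_ae_eq volume hab.ne hae hf continuousOn_const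

end OneVariable

section TwoVariables

open intervalIntegral Set

theorem intervalIntegral_intervalIntegral_swap_of_continuous {f : ℝ → ℝ → ℝ}
    (hf : Continuous (Function.uncurry f)) (a b c d : ℝ) :
    ∫ x in a..b, ∫ y in c..d, f x y = ∫ y in c..d, ∫ x in a..b, f x y :=
  intervalIntegral_intervalIntegral_swap
    ((hf.continuousOn.integrableOn_compact (isCompact_uIcc.prod isCompact_uIcc)).mono_set
      (prod_mono uIoc_subset_uIcc uIoc_subset_uIcc))

theorem continuous_integral_fst {G : ℝ × ℝ → ℝ} (hG : Continuous G) (a : ℝ) :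
    Continuous fun p : ℝ × ℝ => ∫ s in a..p.1, G (s, p.2) :=
  (continuous_parametric_primitive_of_continuous (f := fun y s => G (s, y))
    (hG.comp continuous_swap)).comp continuous_swap

theorem continuous_integral_fst_tail {G : ℝ × ℝ → ℝ} (hG : Continuous G) (b : ℝ) :
    Continuous fun p : ℝ × ℝ => ∫ s in p.1..b, G (s, p.2) := by
  simp_rw [integral_symm b]
  exact (continuous_integral_fst hG b).neg

theorem hasDerivAt_integral_partialY {F : ℝ × ℝ → ℝ} (hF : ContDiff ℝ 1 F) (a x y : ℝ) :
    HasDerivAt (fun y' => ∫ s in a..x, F (s, y')) (∫ s in a..x, partialY F (s, y)) y := by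
  have hY : Continuous (partialY F) := (hF.partialY (m := 0) (by norm_num)).continuous
  have hFTC : ∀ s y', F (s, y') = F (s, y) + ∫ t in y..y', partialY F (s, t) := fun s y' => by
    rw [integral_eq_sub_of_hasDerivAt
      (fun t _ => hasDerivAt_partialY (hF.differentiable one_ne_zero) s t)
      ((hY.comp (continuous_const.prodMk continuous_id)).intervalIntegrable y y')]
    ring
  have hrepr : (fun y' => ∫ s in a..x, F (s, y'))
      = fun y' => (∫ s in a..x, F (s, y)) + ∫ t in y..y', ∫ s in a..x, partialY F (s, t) := by
    funext y'
    rw [← intervalIntegral_intervalIntegral_swap_of_continuous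
      (f := fun s t => partialY F (s, t)) hY, ← intervalIntegral.integral_add]
    · exact integral_congr fun s _ => hFTC s y'
    · exact (hF.continuous.comp (continuous_id.prodMk continuous_const)).intervalIntegrable a x
    · exact (continuous_parametric_intervalIntegral_of_continuous'
        (f := fun s t => partialY F (s, t)) hY y y').intervalIntegrable a x
  rw [hrepr]
  exact ((continuous_parametric_intervalIntegral_of_continuous'
    (f := fun t s => partialY F (s, t)) (hY.comp continuous_swap) a x).integral_hasStrictDerivAt
    y y).hasDerivAt.const_add _

theorem eqOn_Icc_prod_of_eqOn_Ioo_prod {X : Type*} [TopologicalSpace X] [T2Space X]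
    {f g : ℝ × ℝ → X} (hf : Continuous f) (hg : Continuous g) {a b c d : ℝ} (hab : a ≠ b)
    (hcd : c ≠ d) (h : EqOn f g (Ioo a b ×ˢ Ioo c d)) : EqOn f g (Icc a b ×ˢ Icc c d) := by
  simpa only [closure_prod_eq, closure_Ioo hab, closure_Ioo hcd] using h.closure hf hg

theorem eqOn_zero_of_integral_integral_sq_eq_zero {G : ℝ × ℝ → ℝ} (hG : Continuous G)
    {a b c d : ℝ} (hab : a < b) (hcd : c < d)
    (h : ∫ y in c..d, ∫ x in a..b, G (x, y) ^ 2 = 0) : EqOn G 0 (Icc a b ×ˢ Icc c d) := by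
  rintro ⟨x, y⟩ ⟨hx, hy⟩
  have hG2 : Continuous fun p : ℝ × ℝ => G (p.2, p.1) ^ 2 := (hG.comp continuous_swap).pow 2
  have hinner : EqOn (fun y => ∫ x in a..b, G (x, y) ^ 2) 0 (Icc c d) :=
    eqOn_zero_of_integral_eq_zero hcd
      (continuous_parametric_intervalIntegral_of_continuous' hG2 a b).continuousOn
      (fun y _ => integral_nonneg hab.le fun x _ => sq_nonneg _) h
  have hsq : G (x, y) ^ 2 = 0 :=
    eqOn_zero_of_integral_eq_zero hab
      ((hG.comp (continuous_id.prodMk continuous_const)).pow 2).continuousOn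
      (fun x _ => sq_nonneg (G (x, y))) (hinner hy) hx
  exact pow_eq_zero_iff two_ne_zero |>.1 hsq

end TwoVariables

section Energy

open intervalIntegral Set

variable {F : ℝ × ℝ → ℝ} {a b c d : ℝ}

theorem integral_primitive_mul_partialYY (hF : ContDiff ℝ 2 F) (x : ℝ)
    (hc : partialY F (x, c) = 0) (hd : partialY F (x, d) = 0) :
    ∫ t in c..d, (∫ s in a..x, F (s, t)) * partialY (partialY F) (x, t)
      = -∫ t in c..d, (∫ s in a..x, partialY F (s, t)) * partialY F (x, t) := by
  have hY : ContDiff ℝ 1 (partialY F) := hF.partialY (by norm_num)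
  have hYY := continuous_partialY_partialY hF
  have hV : Continuous fun t => ∫ s in a..x, partialY F (s, t) :=
    (continuous_integral_fst hY.continuous a).comp (continuous_const.prodMk continuous_id)
  have hYYx : Continuous fun t => partialY (partialY F) (x, t) :=
    hYY.comp (continuous_const.prodMk continuous_id)
  rw [integral_mul_deriv_eq_deriv_mul
    (fun t _ => hasDerivAt_integral_partialY (hF.of_le (by norm_num)) a x t)
    (fun t _ => hasDerivAt_partialY (hY.differentiable one_ne_zero) x t)
    (hV.intervalIntegrable c d) (hYYx.intervalIntegrable c d), hc, hd]
  simp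

theorem mul_integral_integral_sq_eq_zero {lam : ℝ} (hF : ContDiff ℝ 3 F) (hab : a ≤ b)
    (hcd : c ≤ d)
    (heq : ∀ x ∈ Icc a b, ∀ y ∈ Icc c d, lam * F (x, y) + partialX (partialX (partialX F)) (x, y)
      - ∫ s in x..b, partialY (partialY F) (s, y) = 0)
    (ha : ∀ y ∈ Icc c d, F (a, y) = 0) (hb : ∀ y ∈ Icc c d, F (b, y) = 0)
    (hXa : ∀ y ∈ Icc c d, partialX F (a, y) = 0) (hXb : ∀ y ∈ Icc c d, partialX F (b, y) = 0)
    (hYc : ∀ x ∈ Icc a b, partialY F (x, c) = 0) (hYd : ∀ x ∈ Icc a b, partialY F (x, d) = 0)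
    (hflux : ∀ y ∈ Icc c d, ∫ s in a..b, partialY F (s, y) = 0) :
    lam * ∫ y in c..d, ∫ x in a..b, F (x, y) ^ 2 = 0 := by
  have hX := hF.partialX (m := 2) (by norm_num)
  have hXX := hX.partialX (m := 1) (by norm_num)
  have hY := hF.partialY (m := 2) (by norm_num)
  have hYY := continuous_partialY_partialY (hF.of_le (by norm_num))
  have hXXX := continuous_partialX_partialX_partialX hF
  have hslice : ∀ {G : ℝ × ℝ → ℝ}, Continuous G → ∀ y, Continuous fun x => G (x, y) :=
    fun hG y => hG.comp (continuous_id.prodMk continuous_const)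
  have hx_energy : ∀ y ∈ Icc c d, lam * ∫ x in a..b, F (x, y) ^ 2
      = ∫ x in a..b, (∫ s in a..x, F (s, y)) * partialY (partialY F) (x, y) := fun y hy =>
    integral_sq_eq_of_third_order_eq
      (fun x => hasDerivAt_partialX (hF.differentiable (by norm_num)) x y)
      (fun x => hasDerivAt_partialX (hX.differentiable (by norm_num)) x y)
      (fun x => hasDerivAt_partialX (hXX.differentiable one_ne_zero) x y)
      (hslice hXXX y) (hslice hYY y) (fun x hx => heq x (uIcc_of_le hab ▸ hx) y hy)
      (ha y hy) (hb y hy) (hXa y hy) (hXb y hy)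
  have hflux_sq : ∀ y ∈ Icc c d,
      ∫ x in a..b, (∫ s in a..x, partialY F (s, y)) * partialY F (x, y) = 0 := fun y hy => by
    rw [integral_primitive_mul_self (hslice hY.continuous y), hflux y hy]
    ring
  calc lam * ∫ y in c..d, ∫ x in a..b, F (x, y) ^ 2
      = ∫ y in c..d, ∫ x in a..b, (∫ s in a..x, F (s, y)) * partialY (partialY F) (x, y) := by
        rw [← intervalIntegral.integral_const_mul]
        exact integral_congr fun y hy => hx_energy y (uIcc_of_le hcd ▸ hy)
    _ = ∫ x in a..b, ∫ y in c..d, (∫ s in a..x, F (s, y)) * partialY (partialY F) (x, y) := by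
        rw [intervalIntegral_intervalIntegral_swap_of_continuous]
        exact ((continuous_integral_fst hF.continuous a).mul hYY).comp continuous_swap
    _ = ∫ x in a..b, -∫ y in c..d, (∫ s in a..x, partialY F (s, y)) * partialY F (x, y) :=
        integral_congr fun x hx => integral_primitive_mul_partialYY (hF.of_le (by norm_num)) x
          (hYc x (uIcc_of_le hab ▸ hx)) (hYd x (uIcc_of_le hab ▸ hx))
    _ = -∫ y in c..d, ∫ x in a..b, (∫ s in a..x, partialY F (s, y)) * partialY F (x, y) := by
        rw [intervalIntegral.integral_neg, intervalIntegral_intervalIntegral_swap_of_continuous]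
        exact (continuous_integral_fst hY.continuous a).mul hY.continuous
    _ = 0 := by
        rw [integral_congr fun y hy => hflux_sq y (uIcc_of_le hcd ▸ hy)]
        simp

end Energy

/-- `λ ≠ 0` case of the spectral uniqueness problem without drift term:
if `λ u + u_xxx - ∫ₓ^L u_yy(s,y) ds = 0` on `Ω` with the over-determined boundary
conditions, then `u ≡ 0` on `[0,L]²`. -/
theorem kp_spectral_uniqueness_no_drift (L lam : ℝ) (hL : 0 < L) (hlam : lam ≠ 0)
    (u : ℝ → ℝ → ℝ) (hu : ContDiff ℝ 3 (fun p : ℝ × ℝ => u p.1 p.2))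
    (heq : ∀ x ∈ Set.Ioo (0:ℝ) L, ∀ y ∈ Set.Ioo (0:ℝ) L,
      lam * u x y + pdx3 u x y - (∫ s in x..L, pdy2 u s y) = 0)
    (hbx : ∀ y ∈ Set.Icc (0:ℝ) L,
      u 0 y = 0 ∧ u L y = 0 ∧ pdx u 0 y = 0 ∧ pdx u L y = 0)
    (hby : ∀ x ∈ Set.Icc (0:ℝ) L, u x L = 0 ∧ pdy u x L = 0 ∧ pdy u x 0 = 0)
    (hint : ∀ y ∈ Set.Icc (0:ℝ) L, (∫ s in (0:ℝ)..L, pdy u s y) = 0) :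
    ∀ x ∈ Set.Icc (0:ℝ) L, ∀ y ∈ Set.Icc (0:ℝ) L, u x y = 0 := by
  set F : ℝ × ℝ → ℝ := Function.uncurry u
  have hF : ContDiff ℝ 3 F := hu
  have hdiff : Differentiable ℝ F := hF.differentiable (by norm_num)
  simp only [pdx_eq hdiff, pdy_eq hdiff, pdx3_eq_s16 hF,
    pdy2_eq_s16 (hF.of_le (by norm_num))] at heq hbx hby hint
  have hresidual : Continuous fun p : ℝ × ℝ => lam * F p + partialX (partialX (partialX F)) p
      - ∫ s in p.1..L, partialY (partialY F) (s, p.2) :=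
    ((continuous_const.mul hF.continuous).add (continuous_partialX_partialX_partialX hF)).sub
      (continuous_integral_fst_tail (continuous_partialY_partialY (hF.of_le (by norm_num))) L)
  have heqC := eqOn_Icc_prod_of_eqOn_Ioo_prod hresidual continuous_const hL.ne hL.ne
    fun p hp => heq p.1 hp.1 p.2 hp.2
  have henergy := mul_integral_integral_sq_eq_zero (F := F) (lam := lam) hF hL.le hL.le
    (fun x hx y hy => heqC ⟨hx, hy⟩) (fun y hy => (hbx y hy).1) (fun y hy => (hbx y hy).2.1)
    (fun y hy => (hbx y hy).2.2.1) (fun y hy => (hbx y hy).2.2.2) (fun x hx => (hby x hx).2.2)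
    (fun x hx => (hby x hx).2.1) hint
  have hzero := eqOn_zero_of_integral_integral_sq_eq_zero hF.continuous hL hL
    ((mul_eq_zero.1 henergy).resolve_left hlam)
  exact fun x hx y hy => hzero (Set.mk_mem_prod hx hy)

end
end
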